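/- Let n be an odd integer with n ≥ 3 and let B = [b_{ij}] be an n×n real constant row-sum matrix with constant row-sum λ₁ (Be = λ₁e). For each j, let β_j and γ_j be, respectively, the opposite in sign of the ((n−1)/2)-th largest and of the ((n+1)/2)-th largest numbers among the n−1 off-diagonal entries b_{1j}, …, b_{j−1,j}, b_{j+1,j}, …, b_{nj} of column j, and let F = [b_{ij} + β_j] and G = [b_{ij} + γ_j]. Then every complex eigenvalue of B different from λ₁ lies in the intersection of the Gershgorin region of the second type of F^T with the Gershgorin region of the second type of G^T. -/

import Mathlib

open Matrix
open scoped ENNReal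

/-- Non-increasing (descending) sort of a list of reals. -/
noncomputable def sortDesc (l : List ℝ) : List ℝ := (l.insertionSort (· ≤ ·)).reverse

/-- Given the descending rearrangement `l` of `n` numbers, the sum of the largest
(about) half minus the sum of the smallest (about) half, skipping the middle
element when `n` is odd. -/
noncomputable def halfSumDiff (n : ℕ) (l : List ℝ) : ℝ :=
  if n % 2 = 1 then (l.take ((n - 1) / 2)).sum - (l.drop ((n + 1) / 2)).sum
  else (l.take (n / 2)).sum - (l.drop (n / 2)).sum

/-- Radius of the `i`-th Gershgorin disc of the second type of `M`, computed from
the `i`-th row of `M` with the diagonal entry replaced by `0`. -/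
noncomputable def secondTypeRadius {n : ℕ} (M : Matrix (Fin n) (Fin n) ℝ) (i : Fin n) : ℝ :=
  halfSumDiff n (sortDesc (List.ofFn fun j : Fin n => if j = i then 0 else M i j))

/-- The `i`-th Gershgorin disc of the second type of `M`. -/
noncomputable def secondTypeDisc {n : ℕ} (M : Matrix (Fin n) (Fin n) ℝ) (i : Fin n) : Set ℂ :=
  Metric.closedBall ((M i i : ℝ) : ℂ) (secondTypeRadius M i)

/-- The Gershgorin region of the second type of `M`. -/
noncomputable def secondTypeRegion {n : ℕ} (M : Matrix (Fin n) (Fin n) ℝ) : Set ℂ :=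
  ⋃ i : Fin n, secondTypeDisc M i

/-- `μ` is a (complex) eigenvalue of the real matrix `A`, i.e. a complex root of
its characteristic polynomial. -/
def IsEigenvalueC {n : ℕ} (A : Matrix (Fin n) (Fin n) ℝ) (μ : ℂ) : Prop :=
  ((A.map ((↑) : ℝ → ℂ)).charpoly).IsRoot μ

/-- The `k`-th largest element (1-indexed) among the `n - 1` off-diagonal entries of
column `j` of `B`. -/
noncomputable def kthLargestOffDiag {n : ℕ} (B : Matrix (Fin n) (Fin n) ℝ) (j : Fin n)
    (k : ℕ) : ℝ :=
  (sortDesc (((List.ofFn fun i : Fin n => B i j).eraseIdx j.val))).getD (k - 1) 0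

/-- The ℓ_p norm of a vector in ℝ^n. -/
noncomputable def lpNorm {n : ℕ} (p : ℝ≥0∞) (x : Fin n → ℝ) : ℝ :=
  @norm (PiLp p fun _ : Fin n => ℝ) _ ((WithLp.equiv p (∀ _ : Fin n, ℝ)).symm x)

/-- The seminorm-like quantity `τ_p(B)`: the supremum of `‖Bᵀ x‖_p` over all real
vectors `x` with `xᵀ e = 0` and `‖x‖_p = 1`. -/
noncomputable def tau {n : ℕ} (p : ℝ≥0∞) (B : Matrix (Fin n) (Fin n) ℝ) : ℝ :=
  sSup { t : ℝ | ∃ x : Fin n → ℝ, (∑ i, x i) = 0 ∧ lpNorm p x = 1 ∧ t = lpNorm p (Bᵀ *ᵥ x) }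

/-- The Ostrowski–Brauer set `Γ(M)` of a real square matrix `M`. -/
noncomputable def brauerSet {n : ℕ} (M : Matrix (Fin n) (Fin n) ℝ) : Set ℂ :=
  ⋃ (i : Fin n) (j : Fin n) (_ : i < j),
    { y : ℂ | ‖y - (M i i : ℝ)‖ * ‖y - (M j j : ℝ)‖ ≤
        (∑ k ∈ Finset.univ.filter fun k => k ≠ i, |M i k|) *
        (∑ k ∈ Finset.univ.filter fun k => k ≠ j, |M j k|) }

/-- `cs_j(A)` from Definition 2.3: sorted column sums difference. -/
noncomputable def csCol {n : ℕ} (A : Matrix (Fin n) (Fin n) ℝ) (j : Fin n) : ℝ :=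
  halfSumDiff n (sortDesc (List.ofFn fun i : Fin n => A i j))

/-!
If `x ∈ ℝⁿ` is sorted decreasingly, `halfSumDiff n x = ∑ j, |x j - c|` with `c` a median of `x`.
If `M v = μ v` with `∑ v = 0`, subtracting the median `c i` of the `i`-th row (diagonal entry
replaced by `0`) from every entry of that row does not change `M v`, and the classical Gershgorin
theorem for the shifted matrix, together with `|μ - M i i| ≤ |μ - (M i i - c i)| + |c i|`, gives
the second-type disc.

For `B e = λ₁ e` and `Bᵀ v = μ v` we get `λ₁ (eᵀ v) = eᵀ Bᵀ v = μ (eᵀ v)`, so `∑ v = 0` once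
`μ ≠ λ₁`. The rows of `Fᵀ` and `Gᵀ` differ from those of `Bᵀ` by constants, so `v` is also an
eigenvector of `Fᵀ` and `Gᵀ` for `μ`.
-/

lemma sortDesc_perm (l : List ℝ) : (sortDesc l).Perm l :=
  (List.reverse_perm _).trans (List.perm_insertionSort _ l)

lemma pairwise_sortDesc (l : List ℝ) : (sortDesc l).Pairwise (· ≥ ·) := by
  rw [sortDesc, List.pairwise_reverse]
  exact List.pairwise_insertionSort (· ≤ ·) l

namespace List

lemma sum_map_abs_sub_of_le {l : List ℝ} {c : ℝ} (h : ∀ y ∈ l, c ≤ y) :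
    (l.map fun y => |y - c|).sum = l.sum - l.length * c := by
  induction l with
  | nil => simp
  | cons a l ih =>
    rw [forall_mem_cons] at h
    simp only [map_cons, sum_cons, length_cons, ih h.2, abs_of_nonneg (sub_nonneg.2 h.1)]
    push_cast
    ring

lemma sum_map_abs_sub_of_ge {l : List ℝ} {c : ℝ} (h : ∀ y ∈ l, y ≤ c) :
    (l.map fun y => |y - c|).sum = l.length * c - l.sum := by
  induction l with
  | nil => simp
  | cons a l ih =>
    rw [forall_mem_cons] at h
    simp only [map_cons, sum_cons, length_cons, ih h.2, abs_of_nonpos (sub_nonpos.2 h.1)]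
    push_cast
    ring

lemma sum_map_abs_sub_eq_take_drop {l : List ℝ} {c : ℝ} (m : ℕ) (htake : ∀ y ∈ l.take m, c ≤ y)
    (hdrop : ∀ y ∈ l.drop m, y ≤ c) :
    (l.map fun y => |y - c|).sum
      = (l.take m).sum - (l.drop m).sum - ((l.take m).length - (l.drop m).length : ℝ) * c := by
  conv_lhs => rw [← take_append_drop m l]
  rw [map_append, sum_append, sum_map_abs_sub_of_le htake, sum_map_abs_sub_of_ge hdrop]
  ring

lemma halfSumDiff_eq_sum_abs_sub_median {l : List ℝ} (hl : l.Pairwise (· ≥ ·)) :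
    halfSumDiff l.length l = (l.map fun y => |y - l.getD (l.length / 2) 0|).sum := by
  rcases eq_or_ne l [] with rfl | hne
  · simp [halfSumDiff]
  set m := l.length / 2
  have hm : m < l.length := Nat.div_lt_self (length_pos_iff.2 hne) one_lt_two
  have hsorted := pairwise_iff_getElem.1 hl
  have htake : ∀ y ∈ l.take m, l[m] ≤ y := by
    intro y hy
    obtain ⟨j, hj, rfl⟩ := getElem_of_mem hy
    rw [length_take] at hj
    rw [getElem_take]
    exact hsorted j m (by omega) hm (by omega)
  have hdrop : ∀ y ∈ l.drop m, y ≤ l[m] := by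
    intro y hy
    obtain ⟨j, hj, rfl⟩ := getElem_of_mem hy
    rw [length_drop] at hj
    rw [getElem_drop]
    rcases j.eq_zero_or_pos with rfl | hj0
    · simp
    exact hsorted m (m + j) hm (by omega) (by omega)
  rw [getD_eq_getElem _ _ hm, sum_map_abs_sub_eq_take_drop m htake hdrop, length_take,
    length_drop, min_eq_left hm.le, halfSumDiff]
  split_ifs with hodd
  · rw [drop_eq_getElem_cons hm, sum_cons, show (l.length - 1) / 2 = m by omega,
      show (l.length + 1) / 2 = m + 1 by omega, show l.length - m = m + 1 by omega]
    push_cast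
    ring
  · rw [show l.length - m = m by omega]
    ring

end List

lemma exists_sum_abs_sub_eq_halfSumDiff {n : ℕ} (x : Fin n → ℝ) :
    ∃ c : ℝ, ∑ j, |x j - c| = halfSumDiff n (sortDesc (List.ofFn x)) := by
  have hlen : (sortDesc (List.ofFn x)).length = n := by
    rw [(sortDesc_perm _).length_eq, List.length_ofFn]
  have hmedian := List.halfSumDiff_eq_sum_abs_sub_median (pairwise_sortDesc (List.ofFn x))
  rw [hlen, ((sortDesc_perm _).map _).sum_eq, List.map_ofFn, List.sum_ofFn] at hmedian
  exact ⟨_, hmedian.symm⟩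

lemma add_rowConst_mulVec_of_sum_eq_zero {ι R : Type*} [Fintype ι] [NonUnitalNonAssocSemiring R]
    {A : Matrix ι ι R} (c : ι → R) {v : ι → R} (hv : ∑ j, v j = 0) :
    (A + of fun i _ => c i) *ᵥ v = A *ᵥ v := by
  ext i
  simp [mulVec, dotProduct, add_mul, Finset.sum_add_distrib, ← Finset.mul_sum, hv]

theorem mem_secondTypeRegion_of_mulVec_eq_smul {n : ℕ} (M : Matrix (Fin n) (Fin n) ℝ) {μ : ℂ}
    {v : Fin n → ℂ} (hv : v ≠ 0) (hsum : ∑ j, v j = 0) (hμ : M.map ((↑) : ℝ → ℂ) *ᵥ v = μ • v) :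
    μ ∈ secondTypeRegion M := by
  choose c hc using fun i => exists_sum_abs_sub_eq_halfSumDiff fun j => if j = i then 0 else M i j
  set M' := M.map ((↑) : ℝ → ℂ) + of fun i _ => -(c i : ℂ)
  have hM' : Module.End.HasEigenvalue (toLin' M') μ :=
    Module.End.hasEigenvalue_of_hasEigenvector ⟨Module.End.mem_eigenspace_iff.2 (by
      rw [toLin'_apply, add_rowConst_mulVec_of_sum_eq_zero _ hsum, hμ]), hv⟩
  obtain ⟨k, hk⟩ := eigenvalue_mem_ball hM'
  refine Set.mem_iUnion.2 ⟨k, ?_⟩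
  rw [secondTypeDisc, Metric.mem_closedBall, secondTypeRadius, ← hc k,
    ← Finset.add_sum_erase _ _ (Finset.mem_univ k)]
  rw [Metric.mem_closedBall] at hk
  have hoff : ∀ j ∈ Finset.univ.erase k, ‖M' k j‖ = |(if j = k then 0 else M k j) - c k| := by
    intro j hj
    rw [if_neg (Finset.ne_of_mem_erase hj), ← Real.norm_eq_abs, ← Complex.norm_real]
    simp [M', ← sub_eq_add_neg]
  have hdiag : dist (M' k k) (M k k) = |c k| := by
    simp [M', Complex.norm_real, ← sub_eq_add_neg]
  rw [if_pos rfl, zero_sub, abs_neg, ← Finset.sum_congr rfl hoff, ← hdiag, add_comm]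
  exact (dist_triangle _ _ _).trans (add_le_add_left hk _)

lemma sum_eq_zero_of_transpose_mulVec_eq_smul {ι R : Type*} [Fintype ι] [CommRing R] [IsDomain R]
    {A : Matrix ι ι R} {lam μ : R} (hA : A *ᵥ 1 = lam • 1) {v : ι → R} (hv : Aᵀ *ᵥ v = μ • v)
    (hne : μ ≠ lam) : ∑ j, v j = 0 := by
  have h : μ * ∑ j, v j = lam * ∑ j, v j := by
    calc μ * ∑ j, v j = 1 ⬝ᵥ Aᵀ *ᵥ v := by rw [hv, dotProduct_smul, one_dotProduct, smul_eq_mul]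
      _ = (A *ᵥ 1) ⬝ᵥ v := by rw [dotProduct_mulVec, vecMul_transpose]
      _ = lam * ∑ j, v j := by rw [hA, smul_dotProduct, one_dotProduct, smul_eq_mul]
  have h' : (μ - lam) * ∑ j, v j = 0 := by rw [sub_mul, h, sub_self]
  exact (mul_eq_zero.1 h').resolve_left (sub_ne_zero.2 hne)

lemma IsEigenvalueC.exists_transpose_mulVec_eq_smul {n : ℕ} {A : Matrix (Fin n) (Fin n) ℝ} {μ : ℂ}
    (h : IsEigenvalueC A μ) : ∃ v ≠ 0, Aᵀ.map ((↑) : ℝ → ℂ) *ᵥ v = μ • v := by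
  have hμ : Module.End.HasEigenvalue (toLin' (Aᵀ.map ((↑) : ℝ → ℂ))) μ := by
    rw [Module.End.hasEigenvalue_iff_isRoot_charpoly, charpoly_toLin', transpose_map,
      charpoly_transpose]
    exact h
  obtain ⟨v, hv⟩ := hμ.exists_hasEigenvector
  exact ⟨v, hv.2, by simpa using Module.End.mem_eigenspace_iff.1 hv.1⟩

theorem stmt6_general {n : ℕ} (B : Matrix (Fin n) (Fin n) ℝ)
    (lam1 : ℝ) (hB : B *ᵥ (1 : Fin n → ℝ) = lam1 • (1 : Fin n → ℝ))
    (F G : Matrix (Fin n) (Fin n) ℝ)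
    (hF : ∀ i j, F i j = B i j + -kthLargestOffDiag B j ((n - 1) / 2))
    (hG : ∀ i j, G i j = B i j + -kthLargestOffDiag B j ((n + 1) / 2))
    (mu : ℂ) (hmu : IsEigenvalueC B mu) (hne : mu ≠ (lam1 : ℂ)) :
    mu ∈ secondTypeRegion Fᵀ ∩ secondTypeRegion Gᵀ := by
  obtain ⟨v, hv, hBv⟩ := hmu.exists_transpose_mulVec_eq_smul
  have hBC : B.map ((↑) : ℝ → ℂ) *ᵥ 1 = (lam1 : ℂ) • 1 := by
    ext i
    simpa [mulVec, dotProduct] using congrArg Complex.ofReal (congrFun hB i)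
  have hsum : ∑ j, v j = 0 :=
    sum_eq_zero_of_transpose_mulVec_eq_smul hBC (by rwa [← transpose_map]) hne
  have hshift : ∀ (H : Matrix (Fin n) (Fin n) ℝ) (β : Fin n → ℝ), (∀ i j, H i j = B i j + β j) →
      Hᵀ.map ((↑) : ℝ → ℂ) *ᵥ v = mu • v := by
    intro H β hH
    have hHB : Hᵀ.map ((↑) : ℝ → ℂ) = Bᵀ.map (↑) + of fun i _ => (β i : ℂ) := by
      ext i j
      simp [hH]
    rw [hHB, add_rowConst_mulVec_of_sum_eq_zero _ hsum, hBv]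
  exact ⟨mem_secondTypeRegion_of_mulVec_eq_smul _ hv hsum (hshift F _ hF),
    mem_secondTypeRegion_of_mulVec_eq_smul _ hv hsum (hshift G _ hG)⟩

/-- Corollary 2: for `n` odd, `n ≥ 3`, and `B` constant row-sum with row
sum `λ₁`, every eigenvalue of `B` other than `λ₁` lies in the intersection of the
Gershgorin regions of the second type of `Fᵀ` and `Gᵀ`. -/
theorem stmt6 {n : ℕ} (hodd : Odd n) (hn : 3 ≤ n) (B : Matrix (Fin n) (Fin n) ℝ)
    (lam1 : ℝ) (hB : B *ᵥ (1 : Fin n → ℝ) = lam1 • (1 : Fin n → ℝ))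
    (F G : Matrix (Fin n) (Fin n) ℝ)
    (hF : ∀ i j, F i j = B i j + -kthLargestOffDiag B j ((n - 1) / 2))
    (hG : ∀ i j, G i j = B i j + -kthLargestOffDiag B j ((n + 1) / 2))
    (mu : ℂ) (hmu : IsEigenvalueC B mu) (hne : mu ≠ (lam1 : ℂ)) :
    mu ∈ secondTypeRegion Fᵀ ∩ secondTypeRegion Gᵀ :=
  stmt6_general B lam1 hB F G hF hG mu hmu hne
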